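/- arXiv:2002.02223 — 3 statements merged into one kernel-verified Lean document; each statement's English description precedes it below -/
import Mathlib

section
/- Let n ≥ 5. Any subgroup G of the symmetric group S_n that is isomorphic to S_{n-1} is mapped by some automorphism of S_n onto the stabilizer of the point n, i.e. onto {f ∈ S_n : f(n) = n}. -/
/-! Since `|G| = (n-1)!`, the subgroup `G` has index `n`, so `S_n` acts on the `n` cosets of `G`.
The kernel of this action is the normal core of `G`; it has index greater than `2`, and every
nontrivial normal subgroup of `S_n` (`n ≥ 5`) contains `A_n`, so the action is faithful. Numbering
the cosets so that the coset `G` gets the number `n`, the action becomes an automorphism of `S_n`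
carrying `G`, the stabilizer of the coset `G`, onto the stabilizer of `n`. -/

open Equiv MulAction Subgroup

theorem Equiv.Perm.normalCore_eq_bot_of_two_lt_index {α : Type*} [DecidableEq α] [Fintype α]
    (hα : 5 ≤ Nat.card α) {H : Subgroup (Perm α)} (hH : 2 < H.index) : H.normalCore = ⊥ := by
  by_contra hne
  have : Nontrivial α := Finite.one_lt_card_iff_nontrivial.mp (by omega)
  have hA : alternatingGroup α ≤ H :=
    (Perm.alternatingGroup_le_of_normal hα ((nontrivial_iff_ne_bot _).mpr hne)).trans
      H.normalCore_le
  have := index_antitone hA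
  rw [alternatingGroup.index_eq_two] at this
  omega

namespace Subgroup

variable {G : Type*} [Group G] (H : Subgroup G) {α : Type*} (e : G ⧸ H ≃ α)

def cosetPermHom : G →* Perm α :=
  e.permCongrHom.toMonoidHom.comp (toPermHom G (G ⧸ H))

lemma cosetPermHom_apply (g : G) (q : G ⧸ H) : H.cosetPermHom e g (e q) = e (g • q) := by
  simp [cosetPermHom, Equiv.permCongr_apply]

lemma ker_cosetPermHom : (H.cosetPermHom e).ker = H.normalCore := by
  rw [normalCore_eq_ker, cosetPermHom,
    MonoidHom.ker_comp_of_injective _ _ e.permCongrHom.injective]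

lemma comap_cosetPermHom_stabilizer :
    (stabilizer (Perm α) (e (1 : G))).comap (H.cosetPermHom e) = H := by
  ext g
  rw [mem_comap, mem_stabilizer_iff, Perm.smul_def, cosetPermHom_apply, e.apply_eq_iff_eq,
    ← mem_stabilizer_iff, stabilizer_quotient]

end Subgroup

theorem stmt_0 (n : ℕ) (hn : 5 ≤ n) (G : Subgroup (Equiv.Perm (Fin n)))
    (hG : Nonempty (G ≃* Equiv.Perm (Fin (n - 1)))) :
    ∃ φ : Equiv.Perm (Fin n) ≃* Equiv.Perm (Fin n),
      G.map φ.toMonoidHom =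
        MulAction.stabilizer (Equiv.Perm (Fin n)) (⟨n - 1, by omega⟩ : Fin n) := by
  set t : Fin n := ⟨n - 1, by omega⟩
  have hindex : G.index = n := by
    have h := G.card_mul_index
    rw [Nat.card_congr hG.some.toEquiv, Nat.card_perm, Nat.card_perm, Nat.card_fin, Nat.card_fin,
      ← Nat.mul_factorial_pred (by omega : n ≠ 0), mul_comm n] at h
    exact Nat.eq_of_mul_eq_mul_left (Nat.factorial_pos _) h
  obtain ⟨e, he⟩ : ∃ e : Perm (Fin n) ⧸ G ≃ Fin n, e (1 : Perm (Fin n)) = t := by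
    let e₀ := Finite.equivFinOfCardEq (G.index_eq_card.symm.trans hindex)
    exact ⟨e₀.trans (swap (e₀ (1 : Perm (Fin n))) t), by simp⟩
  have hcore : G.normalCore = ⊥ :=
    Perm.normalCore_eq_bot_of_two_lt_index (by simpa using hn) (by omega)
  have hinj : Function.Injective (G.cosetPermHom e) := by
    rw [← MonoidHom.ker_eq_bot_iff, ker_cosetPermHom, hcore]
  refine ⟨MulEquiv.ofBijective _ (Finite.injective_iff_bijective.mp hinj), ?_⟩
  have hmap := map_comap_eq_self_of_surjective (Finite.injective_iff_surjective.mp hinj)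
    (stabilizer (Perm (Fin n)) (e (1 : Perm (Fin n))))
  rwa [comap_cosetPermHom_stabilizer, he] at hmap
end

section
/- Let n ≥ 5 with n ≠ 6. The automorphism group of the symmetric group S_n coincides with its inner automorphism group, i.e. Out(S_n) is trivial. -/
/-!
An automorphism `φ` of `Sₙ` preserves orders of centralizers. The centralizer of an involution
with `k` transpositions has order `(n - 2k)! 2ᵏ k!`, and for `n ≥ 5`, `n ≠ 6` this equals the
order `2 (n - 2)!` of the centralizer of a transposition only when `k = 1`; hence `φ` maps
transpositions to transpositions. The transpositions `(z i)` pairwise fail to commute, so their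
images pairwise share a point, and three of them force a point `a` common to all. Sending `i` to
the point that `φ (z i)` swaps with `a` defines a permutation `g`, and `φ = conj g` on the
generating set `{(z i)}`.
-/

open Equiv Equiv.Perm

namespace Nat

theorem two_pow_mul_factorial_succ_lt_factorial {j : ℕ} (hj : 3 ≤ j) :
    2 ^ j * (j + 1)! < (2 * j)! := by
  induction j, hj using Nat.le_induction with
  | base => decide
  | succ j _ ih =>
    calc 2 ^ (j + 1) * (j + 1 + 1)! = 2 * (j + 2) * (2 ^ j * (j + 1)!) := by
          rw [factorial_succ (j + 1)]; ring
      _ < 2 * (j + 2) * (2 * j)! := by gcongr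
      _ ≤ (2 * j + 2) * (2 * j + 1) * (2 * j)! := Nat.mul_le_mul_right _ (by nlinarith)
      _ = (2 * (j + 1))! := by
          rw [show 2 * (j + 1) = 2 * j + 1 + 1 by ring, factorial_succ, factorial_succ]; ring

/-- The excluded case `m + 2 * j = 4` has the solution `m = 0`, `j = 2`: this is the extra
automorphism of `S₆`, which exchanges transpositions with triple transpositions. -/
theorem eq_zero_of_factorial_mul_two_pow_eq {m j : ℕ} (h3 : 3 ≤ m + 2 * j)
    (h4 : m + 2 * j ≠ 4) (h : m ! * (2 ^ j * (j + 1)!) = (m + 2 * j)!) : j = 0 := by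
  rw [← factorial_mul_descFactorial (show 2 * j ≤ m + 2 * j by omega), Nat.add_sub_cancel,
    Nat.mul_right_inj (factorial_ne_zero m)] at h
  by_contra hj
  rcases le_or_gt 3 j with hj3 | hj3
  · have : (2 * j)! ≤ (m + 2 * j).descFactorial (2 * j) := by
      rw [← descFactorial_self]; exact descFactorial_le _ (by omega)
    have := two_pow_mul_factorial_succ_lt_factorial hj3
    omega
  · have : (2 * j + 1).descFactorial (2 * j) ≤ (m + 2 * j).descFactorial (2 * j) :=
      descFactorial_le _ (by omega)
    interval_cases j <;> simp [descFactorial, factorial] at this h <;> omega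

end Nat

theorem MulEquiv.nat_card_centralizer_apply {G H : Type*} [Group G] [Group H]
    (e : G ≃* H) (g : G) :
    Nat.card (Subgroup.centralizer {e g}) = Nat.card (Subgroup.centralizer {g}) :=
  Nat.card_congr <| (e.toEquiv.subtypeEquiv fun h => by
    simp only [Subgroup.mem_centralizer_singleton_iff, MulEquiv.toEquiv_eq_coe,
      EquivLike.coe_coe, ← map_mul, e.injective.eq_iff]).symm

namespace Equiv.Perm

theorem exists_apply_ne_self_of_not_commute {α : Type*} {p q : Perm α} (h : ¬Commute p q) :
    ∃ x, p x ≠ x ∧ q x ≠ x := by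
  by_contra! hpq
  exact h (Disjoint.commute fun x => or_iff_not_imp_left.mpr (hpq x))

variable {α : Type*} [DecidableEq α]

open Nat in
theorem nat_card_centralizer_of_cycleType_eq_replicate_two [Fintype α] {σ : Perm α} {k : ℕ}
    (h : σ.cycleType = Multiset.replicate (k + 1) 2) :
    Nat.card (Subgroup.centralizer {σ}) =
      (Fintype.card α - 2 * (k + 1))! * (2 ^ (k + 1) * (k + 1)!) := by
  rw [nat_card_centralizer, h, Multiset.sum_replicate, Multiset.prod_replicate,
    Multiset.toFinset_replicate, if_neg k.succ_ne_zero, Finset.prod_singleton,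
    Multiset.count_replicate_self, smul_eq_mul, mul_comm (k + 1), mul_assoc]

theorem IsSwap.mulAut_apply [Fintype α] (h5 : 5 ≤ Fintype.card α) (h6 : Fintype.card α ≠ 6)
    (φ : MulAut (Perm α)) {σ : Perm α} (hσ : σ.IsSwap) : (φ σ).IsSwap := by
  have hord : _root_.orderOf (φ σ) = 2 := by rw [MulEquiv.orderOf_eq, hσ.orderOf]
  obtain ⟨j, hj⟩ := cycleType_prime_order (hord ▸ Nat.prime_two)
  rw [hord] at hj
  have h2j : 2 * (j + 1) ≤ Fintype.card α := by
    have := (φ σ).support.card_le_univ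
    rwa [← sum_cycleType, hj, Multiset.sum_replicate, smul_eq_mul, mul_comm] at this
  have hcard := φ.nat_card_centralizer_apply σ
  rw [nat_card_centralizer_of_cycleType_eq_replicate_two hj,
    nat_card_centralizer_of_cycleType_eq_replicate_two (k := 0)
      (isSwap_iff_cycleType.mp hσ)] at hcard
  obtain ⟨m, hm⟩ : ∃ m, Fintype.card α = m + 2 * j + 2 := ⟨Fintype.card α - 2 * j - 2, by omega⟩
  have hj0 : j = 0 := by
    refine Nat.eq_zero_of_factorial_mul_two_pow_eq (m := m) (by omega) (by omega) ?_
    rw [hm, show m + 2 * j + 2 - 2 * (j + 1) = m by omega,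
      show m + 2 * j + 2 - 2 * (0 + 1) = m + 2 * j by omega, pow_succ] at hcard
    simp only [zero_add, pow_one, Nat.factorial_one, mul_one] at hcard
    linarith
  rw [isSwap_iff_cycleType, hj, hj0]
  rfl

theorem not_commute_swap_swap {z i j : α} (hi : i ≠ z) (hj : j ≠ z) (hij : i ≠ j) :
    ¬Commute (swap z i) (swap z j) := fun h => by
  have := congrArg (· j) h.eq
  simp only [Perm.mul_apply, swap_apply_right, swap_apply_left,
    swap_apply_of_ne_of_ne hj hij.symm] at this
  exact hi this

theorem IsSwap.eq_swap_of_apply_ne_self {σ : Perm α} (hσ : σ.IsSwap) {a b : α} (hab : a ≠ b)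
    (ha : σ a ≠ a) (hb : σ b ≠ b) : σ = swap a b := by
  obtain ⟨x, y, -, rfl⟩ := hσ
  rw [swap_apply_ne_self_iff] at ha hb
  rcases ha.2 with rfl | rfl <;> rcases hb.2 with rfl | rfl
  all_goals first | exact absurd rfl hab | rfl | exact swap_comm _ _

theorem IsSwap.eq_swap_apply {σ : Perm α} (hσ : σ.IsSwap) {a : α} (ha : σ a ≠ a) :
    σ = swap a (σ a) :=
  hσ.eq_swap_of_apply_ne_self ha.symm ha fun h => ha (σ.injective h)

theorem closure_range_swap [Finite α] (z : α) :
    Subgroup.closure (Set.range (swap z)) = ⊤ := by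
  rw [eq_top_iff, ← closure_isSwap, Subgroup.closure_le]
  rintro _ ⟨x, y, hxy, rfl⟩
  have hmem : ∀ w, swap z w ∈ Subgroup.closure (Set.range (swap z)) :=
    fun w => Subgroup.subset_closure ⟨w, rfl⟩
  by_cases hx : x = z
  · exact hx ▸ hmem y
  by_cases hy : y = z
  · rw [hy, swap_comm]
    exact hmem x
  rw [← swap_mul_swap_mul_swap hy (Ne.symm hxy), swap_comm y z]
  exact mul_mem (mul_mem (hmem x) (hmem y)) (hmem x)

theorem exists_forall_mulAut_swap_apply_ne_self {φ : MulAut (Perm α)}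
    (hφ : ∀ σ : Perm α, σ.IsSwap → (φ σ).IsSwap) {z o t : α} (ho : o ≠ z) (ht : t ≠ z)
    (hot : o ≠ t) : ∃ a, ∀ i ≠ z, φ (swap z i) a ≠ a := by
  have hswap : ∀ i ≠ z, (φ (swap z i)).IsSwap := fun i hi => hφ _ (swap_isSwap_iff.mpr hi.symm)
  have hnc : ∀ i ≠ z, ∀ j ≠ z, i ≠ j → ¬Commute (φ (swap z i)) (φ (swap z j)) :=
    fun i hi j hj hij => (commute_map_iff φ.injective).not.mpr (not_commute_swap_swap hi hj hij)
  obtain ⟨a, hao, hat⟩ := exists_apply_ne_self_of_not_commute (hnc o ho t ht hot)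
  refine ⟨a, fun i hi hia => ?_⟩
  set b := φ (swap z o) a
  set c := φ (swap z t) a
  have hso : φ (swap z o) = swap a b := (hswap o ho).eq_swap_apply hao
  have hst : φ (swap z t) = swap a c := (hswap t ht).eq_swap_apply hat
  have hmoves : ∀ j ≠ z, i ≠ j → ∀ x, φ (swap z j) = swap a x → φ (swap z i) x ≠ x := by
    intro j hj hij x hsj
    obtain ⟨y, hyi, hyj⟩ := exists_apply_ne_self_of_not_commute (hnc i hi j hj hij)
    rw [hsj, swap_apply_ne_self_iff] at hyj
    rcases hyj.2 with rfl | rfl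
    · exact absurd hia hyi
    · exact hyi
  have hio : i ≠ o := by rintro rfl; exact hao hia
  have hit : i ≠ t := by rintro rfl; exact hat hia
  have hbc : b ≠ c := fun h => hot (swap_injective_of_left z (φ.injective (by rw [hso, hst, h])))
  have hsi : φ (swap z i) = φ (swap o t) := by
    rw [(hswap i hi).eq_swap_of_apply_ne_self hbc (hmoves o ho hio b hso)
        (hmoves t ht hit c hst),
      ← swap_mul_swap_mul_swap ht hot.symm, swap_comm t z, map_mul, map_mul, hso, hst,
      swap_comm a c, swap_mul_swap_mul_swap hat hbc.symm]
  have := congrArg (· z) (φ.injective hsi)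
  simp only [swap_apply_left, swap_apply_of_ne_of_ne ho.symm ht.symm] at this
  exact hi this

theorem exists_eq_mulAut_conj_of_isSwap_apply [Fintype α] (hα : 2 < Fintype.card α)
    {φ : MulAut (Perm α)} (hφ : ∀ σ : Perm α, σ.IsSwap → (φ σ).IsSwap) :
    ∃ g : Perm α, φ = MulAut.conj g := by
  obtain ⟨z, o, t, hzo, hzt, hot⟩ := Fintype.two_lt_card_iff.mp hα
  obtain ⟨a, ha⟩ := exists_forall_mulAut_swap_apply_ne_self hφ hzo.symm hzt.symm hot
  set f : α → α := fun i => φ (swap z i) a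
  have hstar : ∀ i, φ (swap z i) = swap (f z) (f i) := by
    have hfz : f z = a := by simp only [f, swap_self, ← Perm.one_def, map_one, Perm.one_apply]
    intro i
    by_cases hi : i = z
    · simp only [hi, swap_self, ← Perm.one_def, map_one]
    · rw [hfz]
      exact (hφ _ (swap_isSwap_iff.mpr (Ne.symm hi))).eq_swap_apply (ha i hi)
  have hf : Function.Injective f := fun i j h =>
    swap_injective_of_left z (φ.injective (by rw [hstar i, hstar j, h]))
  set g := Equiv.ofBijective f (Finite.injective_iff_bijective.mp hf)
  refine ⟨g, MulEquiv.toMonoidHom_injective <|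
    MonoidHom.eq_of_eqOn_dense (closure_range_swap z) ?_⟩
  rintro _ ⟨i, rfl⟩
  exact (hstar i).trans (swap_apply_apply g z i)

end Equiv.Perm

theorem stmt_5 (n : ℕ) (hn : 5 ≤ n) (hn6 : n ≠ 6)
    (φ : MulAut (Equiv.Perm (Fin n))) :
    ∃ g : Equiv.Perm (Fin n), φ = MulAut.conj g :=
  exists_eq_mulAut_conj_of_isSwap_apply (by rw [Fintype.card_fin]; omega) fun _ hσ =>
    hσ.mulAut_apply (by rwa [Fintype.card_fin]) (by rwa [Fintype.card_fin]) φ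
end

section
/- In the group G = F² ⋊ S_3 where F = Z/2Z and S_3 acts on F² = F³/Δ by permuting coordinates of F³ (Δ the diagonal), all subgroups of order 6 are conjugate to each other. -/
/-- The diagonal subgroup `Δ = {0, (1,...,1)}` of `(ℤ/2ℤ)^m`. -/
def Dl (m : ℕ) : AddSubgroup (Fin m → ZMod 2) := AddSubgroup.zmultiples 1

/-- The quotient `(ℤ/2ℤ)^m / Δ`. -/
abbrev Qt (m : ℕ) := (Fin m → ZMod 2) ⧸ Dl m

/-- Permutation of coordinates, as an additive homomorphism of `(ℤ/2ℤ)^m`. -/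
def permHom (m : ℕ) (σ : Equiv.Perm (Fin m)) : (Fin m → ZMod 2) →+ (Fin m → ZMod 2) where
  toFun f := f ∘ σ.symm
  map_zero' := rfl
  map_add' _ _ := rfl

lemma permHom_le (m : ℕ) (σ : Equiv.Perm (Fin m)) :
    Dl m ≤ (Dl m).comap (permHom m σ) := by
  intro f hf
  obtain ⟨k, hk⟩ := AddSubgroup.mem_zmultiples_iff.mp hf
  refine AddSubgroup.mem_zmultiples_iff.mpr ⟨k, ?_⟩
  subst hk
  rfl

/-- The induced additive homomorphism on the quotient `Qt m`. -/
def Qmap (m : ℕ) (σ : Equiv.Perm (Fin m)) : Qt m →+ Qt m :=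
  QuotientAddGroup.map (Dl m) (Dl m) (permHom m σ) (permHom_le m σ)

lemma Qmap_mk (m : ℕ) (σ : Equiv.Perm (Fin m)) (f : Fin m → ZMod 2) :
    Qmap m σ (QuotientAddGroup.mk f) = QuotientAddGroup.mk (f ∘ σ.symm) :=
  rfl

/-- The induced additive automorphism of the quotient `Qt m`. -/
def QAut (m : ℕ) (σ : Equiv.Perm (Fin m)) : Qt m ≃+ Qt m where
  toFun := Qmap m σ
  invFun := Qmap m σ⁻¹
  left_inv := by
    intro q
    induction q using QuotientAddGroup.induction_on with
    | H f =>
      rw [Qmap_mk, Qmap_mk]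
      congr 1
      funext i
      simp [Equiv.Perm.inv_def]
  right_inv := by
    intro q
    induction q using QuotientAddGroup.induction_on with
    | H f =>
      rw [Qmap_mk, Qmap_mk]
      congr 1
      funext i
      simp [Equiv.Perm.inv_def]
  map_add' := (Qmap m σ).map_add

/-- The action of `S_m` on the (multiplicative version of the) quotient `(ℤ/2ℤ)^m / Δ`
by permutation of coordinates. -/
def QAct (m : ℕ) : Equiv.Perm (Fin m) →* MulAut (Multiplicative (Qt m)) :=
  MonoidHom.mk' (fun σ => AddEquiv.toMultiplicative (QAut m σ)) (by
    intro σ τ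
    ext q
    induction q using QuotientAddGroup.induction_on with
    | H f =>
      show Qmap m (σ * τ) (QuotientAddGroup.mk f) =
        Qmap m σ (Qmap m τ (QuotientAddGroup.mk f))
      rw [Qmap_mk, Qmap_mk, Qmap_mk]
      rfl)


/-!
`G` has order 24 and four Sylow 3-subgroups, so the normalizer of a Sylow 3-subgroup has order 6.
A subgroup `H` of order 6 has index 4, hence contains a Sylow 3-subgroup `P` of `G`; as `P` has
index 2 in `H`, it is normal in `H`, so `H ≤ N(P)`, and equality holds by counting. Hence the
subgroups of order 6 are exactly the normalizers of the Sylow 3-subgroups, which are conjugate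
because the Sylow subgroups are. There are four Sylow 3-subgroups rather than one because the one
generated by the 3-cycle of `S₃` is not normalized by the translations of `F²`.
-/

open Subgroup SemidirectProduct

instance {N G : Type*} [Group N] [Group G] {φ : G →* MulAut N} [Finite N] [Finite G] :
    Finite (N ⋊[φ] G) :=
  Finite.of_equiv _ equivProd.symm

theorem Subgroup.le_normalizer_of_relIndex_eq_two {G : Type*} [Group G] {H K : Subgroup G}
    (hHK : H ≤ K) (h : H.relIndex K = 2) : K ≤ normalizer (H : Set G) :=
  have := normal_of_index_eq_two h
  le_normalizer_of_normal_subgroupOf hHK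

section SylowNormalizer

variable {G : Type*} [Group G] [Finite G] {p : ℕ} [hp : Fact p.Prime]

theorem Sylow.card_eq_of_card_eq_mul (P : Sylow p G) {m : ℕ} (hG : Nat.card G = p * m)
    (hm : ¬ p ∣ m) : Nat.card P = p := by
  have hm0 : m ≠ 0 := by rintro rfl; exact hm (dvd_zero p)
  rw [P.card_eq_multiplicity, hG, Nat.factorization_mul hp.out.ne_zero hm0, Finsupp.add_apply,
    hp.out.factorization_self, Nat.factorization_eq_zero_of_not_dvd hm, pow_one]

theorem Sylow.exists_le_of_not_dvd_index {H : Subgroup G} (hH : ¬ p ∣ H.index) :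
    ∃ P : Sylow p G, (P : Subgroup G) ≤ H := by
  obtain ⟨Q⟩ : Nonempty (Sylow p H) := inferInstance
  have hQ : ¬ p ∣ ((Q : Subgroup H).map H.subtype).index := by
    rw [index_map_subtype]
    exact hp.out.not_dvd_mul Q.not_dvd_index hH
  exact ⟨(Q.isPGroup'.map H.subtype).toSylow hQ, map_subtype_le _⟩

theorem Sylow.normalizer_eq_of_le_normalizer (P : Sylow p G) {H : Subgroup G}
    (hH : H ≤ normalizer (P : Set G))
    (hcard : Nat.card H * Nat.card (Sylow p G) = Nat.card G) :
    normalizer (P : Set G) = H := by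
  have hN := card_mul_index (normalizer (P : Set G))
  rw [← P.card_eq_index_normalizer, ← hcard] at hN
  exact (eq_of_le_of_card_ge hH (Nat.eq_of_mul_eq_mul_right Nat.card_pos hN).le).symm

theorem Sylow.exists_normalizer_eq_map_conj (P Q : Sylow p G) :
    ∃ g : G, normalizer (Q : Set G) = (normalizer (P : Set G)).map (MulAut.conj g).toMonoidHom := by
  obtain ⟨g, rfl⟩ := MulAction.exists_smul_eq G P Q
  exact ⟨g, (map_equiv_normalizer_eq _ (MulAut.conj g)).symm⟩

theorem Sylow.exists_normalizer_eq_of_card_eq_two_mul (hp2 : p ≠ 2)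
    (hG : Nat.card G = 2 * p * Nat.card (Sylow p G)) {H : Subgroup G} (hH : Nat.card H = 2 * p) :
    ∃ P : Sylow p G, normalizer (P : Set G) = H := by
  set n := Nat.card (Sylow p G)
  have hn0 : 0 < n := Nat.card_pos
  have hn : ¬ p ∣ n := not_dvd_card_sylow p G
  have hH_index : H.index = n := by
    have := card_mul_index H
    rw [hH, hG] at this
    exact Nat.eq_of_mul_eq_mul_left (Nat.mul_pos two_pos hp.out.pos) this
  obtain ⟨P, hPH⟩ := exists_le_of_not_dvd_index (p := p) (hH_index ▸ hn)
  have hP : Nat.card P = p := by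
    refine P.card_eq_of_card_eq_mul (m := 2 * n) (by rw [hG]; ring) ?_
    exact hp.out.not_dvd_mul (fun h ↦ hp2 ((Nat.prime_dvd_prime_iff_eq hp.out Nat.prime_two).1 h)) hn
  have hP_index : (P : Subgroup G).index = 2 * n := by
    have := card_mul_index (P : Subgroup G)
    rw [hP, hG] at this
    exact Nat.eq_of_mul_eq_mul_left hp.out.pos (this.trans (by ring))
  have hPH_relIndex : (P : Subgroup G).relIndex H = 2 := by
    have := relIndex_mul_index hPH
    rw [hH_index, hP_index] at this
    exact Nat.eq_of_mul_eq_mul_right hn0 this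
  exact ⟨P, P.normalizer_eq_of_le_normalizer (le_normalizer_of_relIndex_eq_two hPH hPH_relIndex)
    (by rw [hH, hG])⟩

theorem Subgroup.exists_conj_eq_of_card_eq_two_mul (hp2 : p ≠ 2)
    (hG : Nat.card G = 2 * p * Nat.card (Sylow p G)) {H K : Subgroup G}
    (hH : Nat.card H = 2 * p) (hK : Nat.card K = 2 * p) :
    ∃ g : G, K = H.map (MulAut.conj g).toMonoidHom := by
  obtain ⟨P, rfl⟩ := Sylow.exists_normalizer_eq_of_card_eq_two_mul hp2 hG hH
  obtain ⟨Q, rfl⟩ := Sylow.exists_normalizer_eq_of_card_eq_two_mul hp2 hG hK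
  exact P.exists_normalizer_eq_map_conj Q

end SylowNormalizer

lemma mem_Dl_three_iff (f : Fin 3 → ZMod 2) : f ∈ Dl 3 ↔ f = 0 ∨ f = 1 := by
  constructor
  · rintro ⟨k, rfl⟩
    dsimp only
    have hk : (k • 1 : Fin 3 → ZMod 2) = fun _ ↦ (k : ZMod 2) := funext fun _ ↦ by simp
    rw [hk]
    generalize (k : ZMod 2) = a
    fin_cases a
    exacts [.inl rfl, .inr rfl]
  · rintro (rfl | rfl)
    · exact zero_mem _
    · exact AddSubgroup.mem_zmultiples _

instance : DecidablePred (· ∈ Dl 3) := fun f ↦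
  decidable_of_iff (f = 0 ∨ f = 1) (mem_Dl_three_iff f).symm

-- Mathlib's `DecidableEq` on quotients is built with `rw`, which blocks evaluation by `decide`.
instance : DecidableEq (Qt 3) := fun a b ↦
  Quotient.recOnSubsingleton₂ a b fun x y ↦
    decidable_of_iff (-x + y ∈ Dl 3) QuotientAddGroup.eq.symm

instance : Fintype (Qt 3) :=
  Fintype.ofSurjective (QuotientAddGroup.mk (s := Dl 3)) Quot.mk_surjective

local notation "𝔾" => SemidirectProduct (Multiplicative (Qt 3)) (Equiv.Perm (Fin 3)) (QAct 3)

theorem card_semidirectProduct_qt_three : Nat.card 𝔾 = 24 := by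
  rw [SemidirectProduct.card, Nat.card_perm, Nat.card_fin]
  show Nat.card (Qt 3) * Nat.factorial 3 = 24
  rw [Nat.card_eq_fintype_card]
  decide

theorem card_sylow_three_semidirectProduct_qt_three : Nat.card (Sylow 3 𝔾) = 4 := by
  set r : 𝔾 := inr (finRotate 3)
  have hr : orderOf r = 3 := by
    rw [orderOf_injective inr inr_injective]
    exact orderOf_eq_prime (by decide) (by decide)
  obtain ⟨P, hrP⟩ := IsPGroup.exists_le_sylow (p := 3) (P := zpowers r)
    (IsPGroup.of_card (n := 1) (by rw [Nat.card_zpowers, hr, pow_one]))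
  have hP : Nat.card P = 3 :=
    P.card_eq_of_card_eq_mul (m := 8) card_semidirectProduct_qt_three (by decide)
  have hP_eq : (P : Subgroup 𝔾) = zpowers r :=
    (eq_of_le_of_card_ge hrP (by rw [hP, Nat.card_zpowers, hr])).symm
  have hP_index : (P : Subgroup 𝔾).index = 8 := by
    have := card_mul_index (P : Subgroup 𝔾)
    rw [hP, card_semidirectProduct_qt_three] at this
    omega
  have h_ne_one : Nat.card (Sylow 3 𝔾) ≠ 1 := by
    intro h
    have := (Nat.card_eq_one_iff_unique.mp h).1
    have hP_normal := P.normal_of_subsingleton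
    set w : 𝔾 := inl (Multiplicative.ofAdd (QuotientAddGroup.mk ![1, 0, 0]))
    have hmem : w * r * w⁻¹ ∈ zpowers r :=
      hP_eq ▸ hP_normal.conj_mem r (hP_eq ▸ mem_zpowers r) w
    obtain ⟨k, hk⟩ := mem_zpowers_iff.mp hmem
    have hleft : (r ^ k).left = 1 := by rw [← map_zpow, left_inr]
    exact (by decide : (w * r * w⁻¹).left ≠ 1) (hk ▸ hleft)
  have hdvd : Nat.card (Sylow 3 𝔾) ∣ 8 := hP_index ▸ P.card_dvd_index
  have hmod : Nat.card (Sylow 3 𝔾) % 3 = 1 % 3 := card_sylow_modEq_one 3 𝔾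
  have hle := Nat.le_of_dvd (by norm_num) hdvd
  interval_cases h : Nat.card (Sylow 3 𝔾) <;> omega

/-- In `G = F² ⋊ S₃`, where `F² = F³/Δ` carries the permutation action of `S₃`,
any two subgroups of order 6 are conjugate. -/
theorem stmt_16
    (H K : Subgroup (SemidirectProduct (Multiplicative (Qt 3)) (Equiv.Perm (Fin 3)) (QAct 3)))
    (hH : Nat.card H = 6) (hK : Nat.card K = 6) :
    ∃ g : SemidirectProduct (Multiplicative (Qt 3)) (Equiv.Perm (Fin 3)) (QAct 3),
      K = H.map (MulAut.conj g).toMonoidHom :=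
  Subgroup.exists_conj_eq_of_card_eq_two_mul (p := 3) (by norm_num)
    (by rw [card_semidirectProduct_qt_three, card_sylow_three_semidirectProduct_qt_three]) hH hK
end
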